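/- arXiv:math/0204123 — 2 statements merged into one kernel-verified Lean document; each statement's English description precedes it below -/
import Mathlib

section
/- Let X be a finite T0 topological space. Then for every subset A ⊆ X, the interior of the closure of A is contained in the closure of the interior of A, i.e. int(cl(A)) ⊆ cl(int(A)). Consequently, every preopen subset of X (a set A with A ⊆ int(cl(A))) is semi-open (satisfies A ⊆ cl(int(A))). -/
/-!
In a finite T0 space every nonempty open set contains an isolated point. An isolated point of
`cl A` lies in `A`, and then in `int A` since its singleton is open. So every open set meeting
`int (cl A)` meets `int A`.
-/

open Filter Topology

section

variable {X : Type*} [TopologicalSpace X]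

theorem mem_interior_of_isOpen_singleton_of_mem_closure {y : X} {A : Set X}
    (hy : IsOpen ({y} : Set X)) (hyA : y ∈ closure A) : y ∈ interior A := by
  have hnhds : 𝓝 y = pure y := (isOpen_singleton_iff_nhds_eq_pure y).1 hy
  rw [mem_closure_iff_frequently, hnhds, frequently_pure] at hyA
  rwa [mem_interior_iff_mem_nhds, hnhds, mem_pure]

theorem interior_closure_subset_closure_interior_of_exists_isOpen_singleton
    (h : ∀ U : Set X, IsOpen U → U.Nonempty → ∃ y ∈ U, IsOpen ({y} : Set X)) (A : Set X) :
    interior (closure A) ⊆ closure (interior A) := by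
  intro x hx
  rw [mem_closure_iff]
  intro V hV hxV
  obtain ⟨y, ⟨hyV, hyA⟩, hy⟩ := h (V ∩ interior (closure A)) (hV.inter isOpen_interior) ⟨x, hxV, hx⟩
  exact ⟨y, hyV, mem_interior_of_isOpen_singleton_of_mem_closure hy (interior_subset hyA)⟩

end

/-- In a finite T0 space, `int (cl A) ⊆ cl (int A)` for every subset `A`;
consequently every preopen set is semi-open. -/
theorem interior_closure_subset_closure_interior
    (X : Type*) [TopologicalSpace X] [Finite X] [T0Space X] :
    (∀ A : Set X, interior (closure A) ⊆ closure (interior A)) ∧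
      (∀ A : Set X, A ⊆ interior (closure A) → A ⊆ closure (interior A)) := by
  have hint := interior_closure_subset_closure_interior_of_exists_isOpen_singleton
    fun (U : Set X) hU hne => exists_isOpen_singleton_of_isOpen_finite U.toFinite hne hU
  exact ⟨hint, fun A hA => hA.trans (hint A)⟩
end

section
/- Let X be a topological space and Y a finite T0 topological space in which every singleton is either open or closed. Let π : X → Y be a continuous function such that: (a) for every point y ∈ Y with {y} closed, the preimage π⁻¹({y}) consists of exactly one point x_y; and (b) for every such y and every point z with {z} open and z ∈ U_y (the minimal open neighborhood of y in Y), the point x_y lies in the closure of π⁻¹({z}). Then π is an open function, i.e. the image under π of every open set in X is open in Y. -/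
/-- The minimal open neighborhood of a point: the intersection of all open
sets containing it. -/
def minNbhd {X : Type*} [TopologicalSpace X] (x : X) : Set X :=
  ⋂₀ {U : Set X | IsOpen U ∧ x ∈ U}

/-- Let `Y` be a finite T0 space in which every singleton is open or closed,
and `π : X → Y` continuous such that each closed point has exactly one
preimage, which lies in the closure of the preimage of each open point of its
minimal neighborhood. Then `π` is an open map. -/
theorem pi_is_open_map
    (X Y : Type*) [TopologicalSpace X] [TopologicalSpace Y] [Finite Y] [T0Space Y]
    (hY : ∀ y : Y, IsOpen ({y} : Set Y) ∨ IsClosed ({y} : Set Y))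
    (π : X → Y) (hcont : Continuous π)
    (ha : ∀ y : Y, IsClosed ({y} : Set Y) → ∃! x : X, π x = y)
    (hb : ∀ y : Y, IsClosed ({y} : Set Y) → ∀ x : X, π x = y →
      ∀ z : Y, IsOpen ({z} : Set Y) → z ∈ minNbhd y →
        x ∈ closure (π ⁻¹' {z})) :
    IsOpenMap π := by
  intro W hW
  have hmin : ∀ y : Y, IsOpen (minNbhd y) := by
    intro y
    exact Set.Finite.isOpen_sInter (Set.toFinite _) (fun U hU => hU.1)
  have hself : ∀ y : Y, y ∈ minNbhd y := by
    intro y U hU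
    exact hU.2
  have key : ∀ y ∈ π '' W, minNbhd y ⊆ π '' W := by
    rintro y ⟨x, hxW, rfl⟩ z hz
    rcases hY (π x) with hyo | hyc
    · have : z ∈ ({π x} : Set Y) := hz _ ⟨hyo, rfl⟩
      rw [Set.mem_singleton_iff] at this
      exact this ▸ ⟨x, hxW, rfl⟩
    · rcases hY z with hzo | hzc
      · have hx := hb (π x) hyc x rfl z hzo hz
        rcases mem_closure_iff.mp hx W hW hxW with ⟨w, hwW, hwz⟩
        exact ⟨w, hwW, hwz⟩
      · -- z ∈ minNbhd (π x) and {z} closed ⇒ π x ∈ closure {z} = {z}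
        have hπx : π x ∈ closure ({z} : Set Y) := by
          rw [mem_closure_iff]
          intro U hU hyU
          exact ⟨z, hz U ⟨hU, hyU⟩, rfl⟩
        rw [hzc.closure_eq, Set.mem_singleton_iff] at hπx
        exact hπx ▸ ⟨x, hxW, rfl⟩
  have : π '' W = ⋃ y ∈ π '' W, minNbhd y := by
    apply Set.Subset.antisymm
    · intro y hy
      exact Set.mem_biUnion hy (hself y)
    · exact Set.iUnion₂_subset key
  rw [this]
  exact isOpen_biUnion (fun y _ => hmin y)
end
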